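/- arXiv:1404.2647 — 2 statements merged into one kernel-verified Lean document; each statement's English description precedes it below -/
import Mathlib

section
/- Minimizing the cost functional C(M_0,…,M_K) = Σ_{k=0}^{K} M_{K−k} η^{kγ} over positive reals M_{K−k}, subject to the error constraint Σ_{k=0}^{K} C_I C_ζ M_{K−k}^{−μ} η^{−kβ} = ε/2, is achieved by M_{K−k} = (2 C_I C_ζ S(η,K)/ε)^{1/μ} · η^{−k(β+γ)/(μ+1)}, where S(η,K) = Σ_{k=0}^{K} η^{−k(β−γμ)/(μ+1)}; moreover this choice satisfies the constraint with equality. -/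
open Real Finset

/-! The allocation is the Lagrange critical point: with multiplier `L`, each level minimises
`x ↦ a x + L c x^(-μ)` separately, the minimum sitting where `μ L c = a x^(μ+1)`. Summing these
one-variable inequalities over the levels and cancelling the equal constraint sums gives global
minimality; the one-variable inequality is weighted AM-GM in the form `μ + 1 ≤ μ t + t^(-μ)`. -/

lemma add_one_le_mul_add_rpow_neg {μ t : ℝ} (hμ : 0 ≤ μ) (ht : 0 < t) :
    μ + 1 ≤ μ * t + t ^ (-μ) := by
  have hμ1 : 0 < μ + 1 := by linarith
  have amgm := geom_mean_le_arith_mean2_weighted (w₁ := μ / (μ + 1)) (w₂ := 1 / (μ + 1))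
    (p₁ := t) (p₂ := t ^ (-μ)) (by positivity) (by positivity) ht.le (by positivity)
    (by field_simp)
  have geom_eq_one : t ^ (μ / (μ + 1)) * (t ^ (-μ)) ^ (1 / (μ + 1)) = 1 := by
    rw [← rpow_mul ht.le, ← rpow_add ht, show μ / (μ + 1) + -μ * (1 / (μ + 1)) = 0 by ring,
      rpow_zero]
  rw [geom_eq_one] at amgm
  calc μ + 1 = (μ + 1) * 1 := (mul_one _).symm
    _ ≤ (μ + 1) * (μ / (μ + 1) * t + 1 / (μ + 1) * t ^ (-μ)) := by gcongr
    _ = μ * t + t ^ (-μ) := by field_simp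

lemma mul_add_mul_rpow_neg_le {μ a b m x : ℝ} (hμ : 0 < μ) (ha : 0 < a) (hm : 0 < m)
    (hx : 0 < x) (hstat : μ * b = a * m ^ (μ + 1)) :
    a * m + b * m ^ (-μ) ≤ a * x + b * x ^ (-μ) := by
  set c := b * m ^ (-μ)
  have hc : μ * c = a * m := by
    rw [← mul_assoc, hstat, mul_assoc, ← rpow_add hm, add_neg_cancel_comm, rpow_one]
  have hc0 : 0 < c := pos_of_mul_pos_right (hc ▸ mul_pos ha hm) hμ.le
  have hx_eq : x = m * (x / m) := (mul_div_cancel₀ x hm.ne').symm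
  have hx_pow : b * x ^ (-μ) = c * (x / m) ^ (-μ) := by
    rw [hx_eq, mul_rpow hm.le (by positivity), ← mul_assoc, ← hx_eq]
  calc a * m + c = c * (μ + 1) := by rw [← hc]; ring
    _ ≤ c * (μ * (x / m) + (x / m) ^ (-μ)) :=
      mul_le_mul_of_nonneg_left (add_one_le_mul_add_rpow_neg hμ.le (by positivity)) hc0.le
    _ = a * x + b * x ^ (-μ) := by
      rw [hx_pow, mul_add, ← mul_assoc, mul_comm c μ, hc]; field_simp

theorem sum_mul_le_of_stationary {ι : Type*} (s : Finset ι) {μ L : ℝ} {a c m N : ι → ℝ}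
    (hμ : 0 < μ) (ha : ∀ k ∈ s, 0 < a k) (hm : ∀ k ∈ s, 0 < m k) (hN : ∀ k ∈ s, 0 < N k)
    (hstat : ∀ k ∈ s, μ * (L * c k) = a k * m k ^ (μ + 1))
    (hcon : ∑ k ∈ s, c k * N k ^ (-μ) = ∑ k ∈ s, c k * m k ^ (-μ)) :
    ∑ k ∈ s, m k * a k ≤ ∑ k ∈ s, N k * a k := by
  have lagrangian_le : ∑ k ∈ s, (a k * m k + L * c k * m k ^ (-μ))
      ≤ ∑ k ∈ s, (a k * N k + L * c k * N k ^ (-μ)) :=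
    sum_le_sum fun k hk => mul_add_mul_rpow_neg_le hμ (ha k hk) (hm k hk) (hN k hk) (hstat k hk)
  simp only [sum_add_distrib, mul_assoc L, ← mul_sum, hcon, mul_comm (a _)] at lagrangian_le
  linarith

lemma rpow_mul_rpow_rpow {x y : ℝ} (hx : 0 ≤ x) (hy : 0 ≤ y) (a b p : ℝ) :
    (x ^ a * y ^ b) ^ p = x ^ (a * p) * y ^ (b * p) := by
  rw [mul_rpow (rpow_nonneg hx a) (rpow_nonneg hy b), ← rpow_mul hx, ← rpow_mul hy]

section Allocation

variable {A η μ β γ x : ℝ}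

lemma allocation_rpow_neg_mul (hA : 0 < A) (hη : 0 < η) (hμ : 0 < μ) :
    (A ^ (1 / μ) * η ^ (-x * (β + γ) / (μ + 1))) ^ (-μ) * η ^ (-x * β)
      = A⁻¹ * η ^ (-x * (β - γ * μ) / (μ + 1)) := by
  have hμ1 : μ + 1 ≠ 0 := by positivity
  rw [rpow_mul_rpow_rpow hA.le hη.le, show 1 / μ * -μ = -1 by field_simp, rpow_neg_one,
    mul_assoc, ← rpow_add hη]
  congr 2
  field_simp
  ring

lemma mul_allocation_rpow_add_one (hA : 0 < A) (hη : 0 < η) (hμ : 0 < μ) :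
    η ^ (x * γ) * (A ^ (1 / μ) * η ^ (-x * (β + γ) / (μ + 1))) ^ (μ + 1)
      = A ^ ((μ + 1) / μ) * η ^ (-x * β) := by
  rw [rpow_mul_rpow_rpow hA.le hη.le, one_div_mul_eq_div,
    div_mul_cancel₀ _ (by positivity : μ + 1 ≠ 0), mul_left_comm, ← rpow_add hη]
  ring_nf

end Allocation

theorem optimal_sample_allocation_general
    (η β γ μ ε CI Cζ : ℝ) (hη : 1 < η)
    (hμ : 0 < μ) (hε : 0 < ε) (hCI : 0 < CI) (hCζ : 0 < Cζ)
    (K : ℕ)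
    (S : ℝ) (hS : S = ∑ k ∈ Finset.range (K + 1),
      η ^ (-(k : ℝ) * (β - γ * μ) / (μ + 1)))
    (M : ℕ → ℝ)
    (hM : ∀ k, M k = (2 * CI * Cζ * S / ε) ^ (1 / μ)
        * η ^ (-(k : ℝ) * (β + γ) / (μ + 1))) :
    -- the constraint is satisfied with equality
    (∑ k ∈ Finset.range (K + 1), CI * Cζ * (M k) ^ (-μ) * η ^ (-(k : ℝ) * β)
        = ε / 2) ∧
    -- and the choice minimizes the cost among all positive allocations
    -- satisfying the error constraint
    (∀ N : ℕ → ℝ, (∀ k ∈ Finset.range (K + 1), 0 < N k) →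
      (∑ k ∈ Finset.range (K + 1),
          CI * Cζ * (N k) ^ (-μ) * η ^ (-(k : ℝ) * β) = ε / 2) →
      ∑ k ∈ Finset.range (K + 1), M k * η ^ ((k : ℝ) * γ)
        ≤ ∑ k ∈ Finset.range (K + 1), N k * η ^ ((k : ℝ) * γ)) := by
  have hη0 : 0 < η := by linarith
  have hS0 : 0 < S := hS ▸ sum_pos (fun k _ => rpow_pos_of_pos hη0 _) nonempty_range_add_one
  set A := 2 * CI * Cζ * S / ε with hA
  have hA0 : 0 < A := by positivity
  have hM0 (k : ℕ) : 0 < M k := hM k ▸ by positivity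
  have hconstraint : ∑ k ∈ range (K + 1), CI * Cζ * M k ^ (-μ) * η ^ (-(k : ℝ) * β) = ε / 2 := by
    simp only [hM, mul_assoc (CI * Cζ), allocation_rpow_neg_mul hA0 hη0 hμ, ← mul_sum, ← hS]
    rw [hA]
    field_simp
  refine ⟨hconstraint, fun N hN hNc => ?_⟩
  refine sum_mul_le_of_stationary _ (L := A ^ ((μ + 1) / μ) / (μ * CI * Cζ))
    (c := fun k : ℕ => CI * Cζ * η ^ (-(k : ℝ) * β)) hμ (fun k _ => by positivity)
    (fun k _ => hM0 k) hN (fun k _ => ?_) ?_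
  · rw [hM k, mul_allocation_rpow_add_one hA0 hη0 hμ]
    field_simp
  · simp only [mul_right_comm (CI * Cζ) (M _ ^ (-μ)), mul_right_comm (CI * Cζ) (N _ ^ (-μ))]
      at hNc hconstraint
    exact hNc.trans hconstraint.symm

theorem optimal_sample_allocation
    (η β γ μ ε CI Cζ : ℝ) (hη : 1 < η) (hβ : 0 < β) (hγ : 0 < γ)
    (hμ : 0 < μ) (hε : 0 < ε) (hCI : 0 < CI) (hCζ : 0 < Cζ)
    (K : ℕ)
    (S : ℝ) (hS : S = ∑ k ∈ Finset.range (K + 1),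
      η ^ (-(k : ℝ) * (β - γ * μ) / (μ + 1)))
    (M : ℕ → ℝ)
    (hM : ∀ k, M k = (2 * CI * Cζ * S / ε) ^ (1 / μ)
        * η ^ (-(k : ℝ) * (β + γ) / (μ + 1))) :
    -- the constraint is satisfied with equality
    (∑ k ∈ Finset.range (K + 1), CI * Cζ * (M k) ^ (-μ) * η ^ (-(k : ℝ) * β)
        = ε / 2) ∧
    -- and the choice minimizes the cost among all positive allocations
    -- satisfying the error constraint
    (∀ N : ℕ → ℝ, (∀ k ∈ Finset.range (K + 1), 0 < N k) →
      (∑ k ∈ Finset.range (K + 1),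
          CI * Cζ * (N k) ^ (-μ) * η ^ (-(k : ℝ) * β) = ε / 2) →
      ∑ k ∈ Finset.range (K + 1), M k * η ^ ((k : ℝ) * γ)
        ≤ ∑ k ∈ Finset.range (K + 1), N k * η ^ ((k : ℝ) * γ)) :=
  optimal_sample_allocation_general η β γ μ ε CI Cζ hη hμ hε hCI hCζ K S hS M hM
end

section
/- Under the optimal choice M_{K−k} = ⌈(2 C_I C_ζ S(η,K)/ε)^{1/μ} η^{−k(β+γ)/(μ+1)}⌉, the total cost satisfies Σ_{k=0}^{K} M_{K−k} η^{kγ} ≤ (2 C_I C_ζ /ε)^{1/μ} S(η,K)^{1+1/μ} + Σ_{k=0}^{K} η^{kγ}. -/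
open Real Finset

theorem multilevel_cost_bound_with_rounding
    (η β γ μ ε CI Cζ : ℝ) (hη : 1 < η) (hβ : 0 < β) (hγ : 0 < γ)
    (hμ : 0 < μ) (hε : 0 < ε) (hCI : 0 < CI) (hCζ : 0 < Cζ)
    (K : ℕ)
    (S : ℝ) (hS : S = ∑ k ∈ Finset.range (K + 1),
      η ^ (-(k : ℝ) * (β - γ * μ) / (μ + 1)))
    (M : ℕ → ℕ)
    (hM : ∀ k, M k = ⌈(2 * CI * Cζ * S / ε) ^ (1 / μ)
        * η ^ (-(k : ℝ) * (β + γ) / (μ + 1))⌉₊) :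
    ∑ k ∈ Finset.range (K + 1), (M k : ℝ) * η ^ ((k : ℝ) * γ)
      ≤ (2 * CI * Cζ / ε) ^ (1 / μ) * S ^ (1 + 1 / μ)
        + ∑ k ∈ Finset.range (K + 1), η ^ ((k : ℝ) * γ) := by
  have hη0 : (0:ℝ) < η := lt_trans one_pos hη
  have hS0 : 0 < S := by
    rw [hS]
    exact Finset.sum_pos (fun k _ => Real.rpow_pos_of_pos hη0 _) (by simp)
  set A : ℝ := (2 * CI * Cζ * S / ε) ^ (1 / μ) with hA
  have hA0 : 0 ≤ A := Real.rpow_nonneg (by positivity) _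
  have key : ∀ k : ℕ, (M k : ℝ) * η ^ ((k : ℝ) * γ)
      ≤ A * η ^ (-(k : ℝ) * (β - γ * μ) / (μ + 1)) + η ^ ((k : ℝ) * γ) := by
    intro k
    have hx0 : 0 ≤ A * η ^ (-(k : ℝ) * (β + γ) / (μ + 1)) := by
      exact mul_nonneg hA0 (Real.rpow_nonneg hη0.le _)
    have hceil : (M k : ℝ) ≤ A * η ^ (-(k : ℝ) * (β + γ) / (μ + 1)) + 1 := by
      rw [hM k]
      exact (Nat.ceil_lt_add_one hx0).le
    have hηk : (0:ℝ) < η ^ ((k : ℝ) * γ) := Real.rpow_pos_of_pos hη0 _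
    calc (M k : ℝ) * η ^ ((k : ℝ) * γ)
        ≤ (A * η ^ (-(k : ℝ) * (β + γ) / (μ + 1)) + 1) * η ^ ((k : ℝ) * γ) :=
          mul_le_mul_of_nonneg_right hceil hηk.le
      _ = A * (η ^ (-(k : ℝ) * (β + γ) / (μ + 1)) * η ^ ((k : ℝ) * γ)) + η ^ ((k : ℝ) * γ) := by
          ring
      _ = A * η ^ (-(k : ℝ) * (β - γ * μ) / (μ + 1)) + η ^ ((k : ℝ) * γ) := by
          rw [← Real.rpow_add hη0]
          congr 1
          congr 1
          field_simp
          ring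
  calc ∑ k ∈ Finset.range (K + 1), (M k : ℝ) * η ^ ((k : ℝ) * γ)
      ≤ ∑ k ∈ Finset.range (K + 1),
          (A * η ^ (-(k : ℝ) * (β - γ * μ) / (μ + 1)) + η ^ ((k : ℝ) * γ)) :=
        Finset.sum_le_sum (fun k _ => key k)
    _ = A * S + ∑ k ∈ Finset.range (K + 1), η ^ ((k : ℝ) * γ) := by
        rw [Finset.sum_add_distrib, ← Finset.mul_sum, ← hS]
    _ = (2 * CI * Cζ / ε) ^ (1 / μ) * S ^ (1 + 1 / μ)
        + ∑ k ∈ Finset.range (K + 1), η ^ ((k : ℝ) * γ) := by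
        congr 1
        rw [hA]
        have : 2 * CI * Cζ * S / ε = (2 * CI * Cζ / ε) * S := by ring
        rw [this, Real.mul_rpow (by positivity) hS0.le,
          Real.rpow_add hS0, Real.rpow_one]
        ring
end
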